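/- Completeness entailment of saturated BGPs: if a BGP P is saturated wrt a set C of completeness statements and a graph G, then C, G ⊨ Compl(P) holds if and only if P̃ ⊆ G, where P̃ is the prototypical (frozen) graph of P. -/
import Mathlib


/-- Constants (IRIs/literals) -/
abbrev Const := ℕ
/-- Variables -/
abbrev Var := ℕ

/-- A term is a constant or a variable. -/
inductive Term where
  | c : Const → Term
  | v : Var → Term
deriving DecidableEq

/-- Triple pattern -/
abbrev TP := Term × Term × Term
/-- Basic graph pattern (also used for graphs, as sets of ground triple patterns) -/
abbrev BGP := Set TP
/-- (Partial) mapping from variables to constants -/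
abbrev Mapping := Var → Option Const

def termVars : Term → Set Var
  | .c _ => ∅
  | .v x => {x}

def tpVars (t : TP) : Set Var := termVars t.1 ∪ termVars t.2.1 ∪ termVars t.2.2

def bgpVars (P : BGP) : Set Var := ⋃ t ∈ P, tpVars t

def termConsts : Term → Set Const
  | .c a => {a}
  | .v _ => ∅

def tpConsts (t : TP) : Set Const := termConsts t.1 ∪ termConsts t.2.1 ∪ termConsts t.2.2

def bgpConsts (P : BGP) : Set Const := ⋃ t ∈ P, tpConsts t

/-- A graph is a BGP all of whose triples are ground. -/
def GroundBGP (P : BGP) : Prop := ∀ t ∈ P, tpVars t = ∅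

def applyTerm (μ : Mapping) : Term → Term
  | .c a => .c a
  | .v x =>
    match μ x with
    | some a => .c a
    | none => .v x

def applyTP (μ : Mapping) (t : TP) : TP :=
  (applyTerm μ t.1, applyTerm μ t.2.1, applyTerm μ t.2.2)

def applyBGP (μ : Mapping) (P : BGP) : BGP := applyTP μ '' P

/-- Domain of a mapping -/
def mdom (μ : Mapping) : Set Var := {x | μ x ≠ none}

/-- Evaluation of a BGP over a graph: ⟦P⟧_G = {μ | dom(μ) = var(P), μP ⊆ G}. -/
def bgpEval (P G : BGP) : Set Mapping := {μ | mdom μ = bgpVars P ∧ applyBGP μ P ⊆ G}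

/-- A completeness statement Compl(P_C). -/
structure CS where
  pat : BGP

/-- The CONSTRUCT query associated to a completeness statement. -/
def constructQ (C : CS) (G : BGP) : BGP := ⋃ μ ∈ bgpEval C.pat G, applyBGP μ C.pat

/-- Transfer operator T_𝒞. -/
def transfer (𝒞 : Set CS) (G : BGP) : BGP := ⋃ C ∈ 𝒞, constructQ C G

/-- (G, G') is a valid extension pair wrt 𝒞. -/
def Valid (𝒞 : Set CS) (G G' : BGP) : Prop :=
  G ⊆ G' ∧ GroundBGP G' ∧ transfer 𝒞 G' ⊆ G

/-- 𝒞, G ⊨ Compl(P). -/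
def Entails (𝒞 : Set CS) (G : BGP) (P : BGP) : Prop :=
  ∀ G', Valid 𝒞 G G' → bgpEval P G' = bgpEval P G

def emptyMap : Mapping := fun _ => none

/-- Union of two mappings (left-biased; used on mappings with disjoint domains). -/
def munion (μ ν : Mapping) : Mapping := fun x => (μ x).orElse (fun _ => ν x)

/-- Partially mapped BGP -/
abbrev PMBGP := BGP × Mapping

/-- Evaluation of a partially mapped BGP: ⟦(P, ν)⟧_G = {ν ∪ ρ | ρ ∈ ⟦P⟧_G}. -/
def evalPM (pm : PMBGP) (G : BGP) : Set Mapping :=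
  {σ | ∃ ρ ∈ bgpEval pm.1 G, σ = munion pm.2 ρ}

def evalPMSet (S : Set PMBGP) (G : BGP) : Set Mapping := ⋃ pm ∈ S, evalPM pm G

/-- S ≡_{𝒞,G} S' : equal evaluations over every valid extension pair. -/
def EquivCG (𝒞 : Set CS) (G : BGP) (S S' : Set PMBGP) : Prop :=
  ∀ G', Valid 𝒞 G G' → evalPMSet S G' = evalPMSet S' G'

/-- The freeze mapping, sending each variable to a (fresh) constant. -/
def freezeMap (frz : Var → Const) : Mapping := fun x => some (frz x)

/-- frz is a genuine freeze mapping: injective and its values are fresh. -/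
def Fresh (frz : Var → Const) (𝒞 : Set CS) (G P : BGP) : Prop :=
  Function.Injective frz ∧
    ∀ x, frz x ∉ bgpConsts G ∪ bgpConsts P ∪ ⋃ C ∈ 𝒞, bgpConsts C.pat

/-- Crucial part: cruc(P, 𝒞, G) = P ∩ id̃⁻¹(T_𝒞(P̃ ∪ G)). -/
def cruc (P : BGP) (𝒞 : Set CS) (G : BGP) (frz : Var → Const) : BGP :=
  {t | t ∈ P ∧ applyTP (freezeMap frz) t ∈ transfer 𝒞 (applyBGP (freezeMap frz) P ∪ G)}

/-- Equivalent partial grounding operator. -/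
def epg (pm : PMBGP) (𝒞 : Set CS) (G : BGP) (frz : Var → Const) : Set PMBGP :=
  {q | ∃ μ ∈ bgpEval (cruc pm.1 𝒞 G frz) G, q = (applyBGP μ pm.1, munion pm.2 μ)}

/-- A partially mapped BGP is saturated wrt 𝒞 and G. -/
def Saturated (pm : PMBGP) (𝒞 : Set CS) (G : BGP) (frz : Var → Const) : Prop :=
  epg pm 𝒞 G frz = {pm}

/-- Partially mapped BGPs reachable from (P, ∅) by the saturation algorithm's epg steps. -/
inductive Reach (𝒞 : Set CS) (G : BGP) (frz : Var → Const) (P : BGP) : PMBGP → Prop where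
  | init : Reach 𝒞 G frz P (P, emptyMap)
  | step {pm pm' : PMBGP} : Reach 𝒞 G frz P pm → epg pm 𝒞 G frz ≠ {pm} →
      pm' ∈ epg pm 𝒞 G frz → Reach 𝒞 G frz P pm'

/-- The set Ω of mappings returned by the saturation algorithm sat(P, 𝒞, G). -/
def satSet (𝒞 : Set CS) (G : BGP) (frz : Var → Const) (P : BGP) : Set Mapping :=
  {ν | ∃ P', Reach 𝒞 G frz P (P', ν) ∧ Saturated (P', ν) 𝒞 G frz}

section Aux

lemma applyTerm_empty (t : Term) : applyTerm emptyMap t = t := by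
  cases t <;> rfl

lemma applyTP_empty (t : TP) : applyTP emptyMap t = t := by
  simp [applyTP, applyTerm_empty]

lemma applyBGP_empty (P : BGP) : applyBGP emptyMap P = P := by
  simp [applyBGP, applyTP_empty, Set.image_id']

lemma munion_empty (μ : Mapping) : munion emptyMap μ = μ := by
  funext x; simp [munion, emptyMap]

lemma applyTerm_ground (μ : Mapping) {t : Term} (h : termVars t = ∅) :
    applyTerm μ t = t := by
  cases t with
  | c a => rfl
  | v x => simp [termVars] at h

lemma applyTP_ground (μ : Mapping) {t : TP} (h : tpVars t = ∅) : applyTP μ t = t := by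
  obtain ⟨a, b, c⟩ := t
  simp only [tpVars, Set.union_empty_iff] at h
  simp [applyTP, applyTerm_ground μ h.1.1, applyTerm_ground μ h.1.2,
    applyTerm_ground μ h.2]

lemma applyBGP_ground (μ : Mapping) {P : BGP} (h : GroundBGP P) :
    applyBGP μ P = P := by
  unfold applyBGP
  rw [Set.image_congr (fun t ht => applyTP_ground μ (h t ht)), Set.image_id']

lemma freeze_ground (frz : Var → Const) (t : TP) :
    tpVars (applyTP (freezeMap frz) t) = ∅ := by
  obtain ⟨a, b, c⟩ := t
  have : ∀ s : Term, termVars (applyTerm (freezeMap frz) s) = ∅ := by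
    intro s; cases s <;> simp [applyTerm, freezeMap, termVars]
  simp [applyTP, tpVars, this]

lemma mdom_empty : mdom emptyMap = ∅ := by
  ext x; simp [mdom, emptyMap]

lemma tpVars_subset {P : BGP} {t : TP} (ht : t ∈ P) : tpVars t ⊆ bgpVars P := by
  intro x hx; exact Set.mem_biUnion ht hx

/-- Saturation implies the crucial part is ground and contained in G. -/
lemma saturated_cruc {𝒞 : Set CS} {G : BGP} {frz : Var → Const} {P : BGP}
    (hsat : Saturated (P, emptyMap) 𝒞 G frz) :
    GroundBGP (cruc P 𝒞 G frz) ∧ cruc P 𝒞 G frz ⊆ G := by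
  have hmem : (P, emptyMap) ∈ epg (P, emptyMap) 𝒞 G frz := by
    rw [hsat]; rfl
  obtain ⟨μ, hμ, heq⟩ := hmem
  have hμe : μ = emptyMap := by
    have h2 := congrArg Prod.snd heq
    simpa [munion_empty] using h2.symm
  subst hμe
  obtain ⟨hdom, hsub⟩ := hμ
  rw [mdom_empty] at hdom
  rw [applyBGP_empty] at hsub
  refine ⟨?_, hsub⟩
  intro t ht
  have := tpVars_subset (P := cruc P 𝒞 G frz) ht
  rw [← hdom] at this
  exact Set.subset_empty_iff.mp this

end Aux

/-- Completeness entailment of saturated BGPs: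
if P is saturated wrt 𝒞 and G, then 𝒞, G ⊨ Compl(P) iff P̃ ⊆ G. -/
theorem stmt9 (𝒞 : Set CS) (G : BGP) (frz : Var → Const) (P : BGP)
    (hg : GroundBGP G) (hfresh : Fresh frz 𝒞 G P)
    (hsat : Saturated (P, emptyMap) 𝒞 G frz) :
    Entails 𝒞 G P ↔ applyBGP (freezeMap frz) P ⊆ G := by
  classical
  obtain ⟨hcg, hcG⟩ := saturated_cruc hsat
  constructor
  · -- Entails → P̃ ⊆ G
    intro hE
    set Pf : BGP := applyBGP (freezeMap frz) P with hPf
    set G' : BGP := Pf ∪ G with hG'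
    have hvalid : Valid 𝒞 G G' := by
      refine ⟨Set.subset_union_right, ?_, ?_⟩
      · intro t ht
        rcases ht with ht | ht
        · obtain ⟨s, hs, rfl⟩ := ht
          exact freeze_ground frz s
        · exact hg t ht
      · -- transfer 𝒞 G' ⊆ G
        intro s hs
        have hsG' : s ∈ G' := by
          obtain ⟨_, ⟨C, rfl⟩, _, ⟨hC, rfl⟩, hsC⟩ := hs
          obtain ⟨_, ⟨μ, rfl⟩, _, ⟨hμ, rfl⟩, hsμ⟩ := hsC
          exact hμ.2 hsμ
        rcases hsG' with hsP | hsG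
        · obtain ⟨t, htP, rfl⟩ := hsP
          have htc : t ∈ cruc P 𝒞 G frz := ⟨htP, hs⟩
          rw [applyTP_ground _ (hcg t htc)]
          exact hcG htc
        · exact hsG
    -- the restricted freeze mapping
    set μ₀ : Mapping := fun x => if x ∈ bgpVars P then some (frz x) else none with hμ₀
    have happ : applyBGP μ₀ P = Pf := by
      unfold applyBGP
      apply Set.image_congr
      intro t ht
      obtain ⟨a, b, c⟩ := t
      have hag : ∀ s : Term, termVars s ⊆ tpVars (a, b, c) →
          applyTerm μ₀ s = applyTerm (freezeMap frz) s := by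
        intro s hsub
        cases s with
        | c d => rfl
        | v x =>
          have hx : x ∈ bgpVars P := tpVars_subset ht (hsub (by simp [termVars]))
          simp [applyTerm, hμ₀, hx, freezeMap]
      simp only [applyTP]
      rw [hag a (fun x hx => by simp [tpVars]; tauto),
        hag b (fun x hx => by simp [tpVars]; tauto),
        hag c (fun x hx => by simp [tpVars]; tauto)]
    have hμ₀mem : μ₀ ∈ bgpEval P G' := by
      refine ⟨?_, by rw [happ]; exact Set.subset_union_left⟩
      ext x
      simp only [mdom, Set.mem_setOf_eq, hμ₀]
      by_cases hx : x ∈ bgpVars P <;> simp [hx]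
    have := hE G' hvalid
    rw [this] at hμ₀mem
    rw [← happ]
    exact hμ₀mem.2
  · -- P̃ ⊆ G → Entails
    intro hPG
    -- P is ground (by freshness)
    have hPground : GroundBGP P := by
      intro t ht
      by_contra hne
      obtain ⟨x, hx⟩ := Set.nonempty_iff_ne_empty.mpr hne
      have hfrzG : frz x ∈ bgpConsts G := by
        have htG : applyTP (freezeMap frz) t ∈ G := hPG ⟨t, ht, rfl⟩
        refine Set.mem_biUnion htG ?_
        obtain ⟨a, b, c⟩ := t
        have key : ∀ s : Term, x ∈ termVars s →
            frz x ∈ termConsts (applyTerm (freezeMap frz) s) := by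
          intro s hs
          cases s with
          | c d => simp [termVars] at hs
          | v y =>
            simp only [termVars, Set.mem_singleton_iff] at hs
            subst hs
            simp [applyTerm, freezeMap, termConsts]
        simp only [tpVars, Set.mem_union] at hx
        rcases hx with (hx | hx) | hx
        · exact Or.inl (Or.inl (key a hx))
        · exact Or.inl (Or.inr (key b hx))
        · exact Or.inr (key c hx)
      exact hfresh.2 x (Or.inl (Or.inl hfrzG))
    have hPsub : P ⊆ G := by
      intro t ht
      have := hPG ⟨t, ht, rfl⟩
      rwa [applyTP_ground _ (hPground t ht)] at this
    have hvars : bgpVars P = ∅ := by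
      rw [Set.eq_empty_iff_forall_notMem]
      intro x hx
      obtain ⟨t, ht, hxt⟩ := Set.mem_iUnion₂.mp hx
      rw [hPground t ht] at hxt
      exact hxt
    intro G' hG'
    ext μ
    simp only [bgpEval, Set.mem_setOf_eq, hvars, applyBGP_ground μ hPground]
    constructor
    · rintro ⟨h1, _⟩; exact ⟨h1, hPsub⟩
    · rintro ⟨h1, _⟩; exact ⟨h1, hPsub.trans hG'.1⟩
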